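/- If a type A is indexed-thin, i.e., for each i the number σ_i(A) of occurrences of p_i is at most 1 and the total number τ_i(A) of occurrences of ⟨_i, ◇_i, □↓_i is at most 1, then ||A|| = |⟦A⟧|, i.e., the free group interpretation of A is a reduced word of length equal to the length of A. -/
import Mathlib


/-- Types of the multimodal bracketed Lambek calculus. -/
inductive ITy where
  | prim : ℕ → ITy
  | ldiv : ITy → ITy → ITy   -- ldiv A B = A \ B
  | rdiv : ITy → ITy → ITy   -- rdiv B A = B / A
  | mul  : ITy → ITy → ITy
  | dia  : ℕ → ITy → ITy
  | box  : ℕ → ITy → ITy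
deriving DecidableEq

/-- Type trees: leaves labeled by types, internal nodes are indexed brackets. -/
inductive ITree where
  | leaf : ITy → ITree
  | node : ℕ → List ITree → ITree

abbrev IHedge := List ITree

/-- Contexts: a hedge with one distinguished hole. -/
inductive ICtx where
  | hole : IHedge → IHedge → ICtx
  | brk  : ℕ → ICtx → IHedge → IHedge → ICtx

/-- Substitution of a hedge for the hole of a context. -/
def ICtx.plug : ICtx → IHedge → IHedge
  | .hole pre post, D => pre ++ D ++ post
  | .brk i c pre post, D => pre ++ (ITree.node i (c.plug D) :: post)

/-- Generators of the free group: primitive types, left brackets, right brackets. -/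
abbrev Gen := ℕ ⊕ ℕ ⊕ ℕ

def lb (i : ℕ) : FreeGroup Gen := FreeGroup.of (Sum.inr (Sum.inl i))
def rb (i : ℕ) : FreeGroup Gen := FreeGroup.of (Sum.inr (Sum.inr i))

/-- Free group interpretation of types. -/
def interpTy : ITy → FreeGroup Gen
  | .prim p => FreeGroup.of (Sum.inl p)
  | .ldiv A B => (interpTy A)⁻¹ * interpTy B
  | .rdiv B A => interpTy B * (interpTy A)⁻¹
  | .mul A B => interpTy A * interpTy B
  | .dia i A => lb i * interpTy A * rb i
  | .box i A => (lb i)⁻¹ * interpTy A * (rb i)⁻¹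

mutual
/-- Free group interpretation of type trees. -/
def interpTree : ITree → FreeGroup Gen
  | .leaf A => interpTy A
  | .node i ts => lb i * interpHedge ts * rb i
/-- Free group interpretation of hedges. -/
def interpHedge : List ITree → FreeGroup Gen
  | [] => 1
  | t :: ts => interpTree t * interpHedge ts
end

/-- Length of a type. -/
def lenTy : ITy → ℕ
  | .prim _ => 1
  | .ldiv A B => lenTy A + lenTy B
  | .rdiv B A => lenTy B + lenTy A
  | .mul A B => lenTy A + lenTy B
  | .dia _ A => lenTy A + 2
  | .box _ A => lenTy A + 2

/-- Number of occurrences of the primitive type `p_i` in a type. -/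
def sigmaTy (i : ℕ) : ITy → ℕ
  | .prim p => if p = i then 1 else 0
  | .ldiv A B => sigmaTy i A + sigmaTy i B
  | .rdiv B A => sigmaTy i B + sigmaTy i A
  | .mul A B => sigmaTy i A + sigmaTy i B
  | .dia _ A => sigmaTy i A
  | .box _ A => sigmaTy i A

/-- Total number of occurrences of `◇_i`, `□↓_i` in a type. -/
def tauTy (i : ℕ) : ITy → ℕ
  | .prim _ => 0
  | .ldiv A B => tauTy i A + tauTy i B
  | .rdiv B A => tauTy i B + tauTy i A
  | .mul A B => tauTy i A + tauTy i B
  | .dia j A => (if j = i then 1 else 0) + tauTy i A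
  | .box j A => (if j = i then 1 else 0) + tauTy i A

mutual
def sigmaTree (i : ℕ) : ITree → ℕ
  | .leaf A => sigmaTy i A
  | .node _ ts => sigmaHedge i ts
def sigmaHedge (i : ℕ) : List ITree → ℕ
  | [] => 0
  | t :: ts => sigmaTree i t + sigmaHedge i ts
end

mutual
/-- Total occurrences of `⟨_i`, `◇_i`, `□↓_i` in a tree. -/
def tauTree (i : ℕ) : ITree → ℕ
  | .leaf A => tauTy i A
  | .node j ts => (if j = i then 1 else 0) + tauHedge i ts
def tauHedge (i : ℕ) : List ITree → ℕ
  | [] => 0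
  | t :: ts => tauTree i t + tauHedge i ts
end

def sigmaCtx (i : ℕ) : ICtx → ℕ
  | .hole pre post => sigmaHedge i pre + sigmaHedge i post
  | .brk _ c pre post => sigmaHedge i pre + sigmaCtx i c + sigmaHedge i post

def tauCtx (i : ℕ) : ICtx → ℕ
  | .hole pre post => tauHedge i pre + tauHedge i post
  | .brk j c pre post => (if j = i then 1 else 0) + tauHedge i pre + tauCtx i c + tauHedge i post


/-! ### Auxiliary development -/

/-- The word representing a type. -/
def wTy : ITy → List (Gen × Bool)
  | .prim p => [(Sum.inl p, true)]
  | .ldiv A B => FreeGroup.invRev (wTy A) ++ wTy B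
  | .rdiv B A => wTy B ++ FreeGroup.invRev (wTy A)
  | .mul A B => wTy A ++ wTy B
  | .dia i A => (Sum.inr (Sum.inl i), true) :: (wTy A ++ [(Sum.inr (Sum.inr i), true)])
  | .box i A => (Sum.inr (Sum.inl i), false) :: (wTy A ++ [(Sum.inr (Sum.inr i), false)])

lemma interpTy_eq_mk (A : ITy) : interpTy A = FreeGroup.mk (wTy A) := by
  induction A with
  | prim p => rfl
  | ldiv A B ihA ihB =>
      simp [interpTy, wTy, ihA, ihB, FreeGroup.inv_mk, FreeGroup.mul_mk]
  | rdiv B A ihB ihA =>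
      simp [interpTy, wTy, ihA, ihB, FreeGroup.inv_mk, FreeGroup.mul_mk]
  | mul A B ihA ihB =>
      simp [interpTy, wTy, ihA, ihB, FreeGroup.mul_mk]
  | dia i A ih =>
      show lb i * interpTy A * rb i = _
      rw [ih]
      rw [show lb i = FreeGroup.mk [(Sum.inr (Sum.inl i), true)] from rfl,
        show rb i = FreeGroup.mk [(Sum.inr (Sum.inr i), true)] from rfl,
        FreeGroup.mul_mk, FreeGroup.mul_mk]
      simp [wTy]
  | box i A ih =>
      show (lb i)⁻¹ * interpTy A * (rb i)⁻¹ = _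
      rw [ih]
      rw [show lb i = FreeGroup.mk [(Sum.inr (Sum.inl i), true)] from rfl,
        show rb i = FreeGroup.mk [(Sum.inr (Sum.inr i), true)] from rfl,
        FreeGroup.inv_mk, FreeGroup.inv_mk, FreeGroup.mul_mk, FreeGroup.mul_mk]
      simp [wTy, FreeGroup.invRev]

lemma wTy_length (A : ITy) : (wTy A).length = lenTy A := by
  induction A <;> simp_all [wTy, lenTy, FreeGroup.invRev_length] <;> omega

def cnt : Gen → ITy → ℕ
  | Sum.inl p, A => sigmaTy p A
  | Sum.inr (Sum.inl i), A => tauTy i A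
  | Sum.inr (Sum.inr i), A => tauTy i A

lemma countP_invRev {α : Type*} [DecidableEq α] (g : α) (L : List (α × Bool)) :
    (FreeGroup.invRev L).countP (fun x => decide (x.1 = g)) =
      L.countP (fun x => decide (x.1 = g)) := by
  simp [FreeGroup.invRev, List.countP_map, Function.comp_def]

lemma countP_wTy (g : Gen) (A : ITy) :
    (wTy A).countP (fun x => decide (x.1 = g)) = cnt g A := by
  induction A with
  | prim p =>
      rcases g with p' | i | i <;>
        simp [wTy, cnt, sigmaTy, tauTy, List.countP_cons] <;>
        first | rfl | (split <;> simp_all)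
  | ldiv A B ihA ihB =>
      rcases g with p' | i | i <;>
        simp_all [wTy, cnt, sigmaTy, tauTy, List.countP_append, countP_invRev]
  | rdiv B A ihB ihA =>
      rcases g with p' | i | i <;>
        simp_all [wTy, cnt, sigmaTy, tauTy, List.countP_append, countP_invRev]
  | mul A B ihA ihB =>
      rcases g with p' | i | i <;>
        simp_all [wTy, cnt, sigmaTy, tauTy, List.countP_append]
  | dia j A ih =>
      rcases g with p' | i | i <;>
        simp_all [wTy, cnt, sigmaTy, tauTy, List.countP_append, List.countP_cons] <;>
        split <;> first | omega | (simp_all <;> omega)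
  | box j A ih =>
      rcases g with p' | i | i <;>
        simp_all [wTy, cnt, sigmaTy, tauTy, List.countP_append, List.countP_cons] <;>
        split <;> first | omega | (simp_all <;> omega)

lemma reduce_eq_self {α : Type*} [DecidableEq α] :
    ∀ (L : List (α × Bool)), (∀ g, L.countP (fun x => decide (x.1 = g)) ≤ 1) →
      FreeGroup.reduce L = L := by
  intro L
  induction L with
  | nil => intro _; rfl
  | cons x L ih =>
      intro h
      have htl : ∀ g, L.countP (fun x => decide (x.1 = g)) ≤ 1 := by
        intro g
        have := h g
        rw [List.countP_cons] at this
        omega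
      rw [FreeGroup.reduce.cons, ih htl]
      cases L with
      | nil => rfl
      | cons hd tl =>
          have hne : ¬ (x.1 = hd.1 ∧ x.2 = !hd.2) := by
            rintro ⟨h1, _⟩
            have := h x.1
            simp [List.countP_cons, h1] at this
          simp only [hne, if_false]

lemma wTy_countP (A : ITy)
    (hs : ∀ i, sigmaTy i A ≤ 1) (ht : ∀ i, tauTy i A ≤ 1) :
    ∀ g, (wTy A).countP (fun x => decide (x.1 = g)) ≤ 1 := by
  intro g
  rw [countP_wTy]
  rcases g with p | i | i
  · exact hs p
  · exact ht i
  · exact ht i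

/-- For an indexed-thin type (each `p_i` occurs at most once and the modalities with
index `i` occur at most once, for every `i`), the length of the type equals the
reduced word length of its free group interpretation. -/
theorem thin_type_len_eq_norm (A : ITy)
    (hs : ∀ i, sigmaTy i A ≤ 1) (ht : ∀ i, tauTy i A ≤ 1) :
    lenTy A = (interpTy A).norm := by
  rw [interpTy_eq_mk]
  rw [show (FreeGroup.mk (wTy A)).norm = (FreeGroup.mk (wTy A)).toWord.length from rfl]
  rw [FreeGroup.toWord_mk, reduce_eq_self _ (wTy_countP A hs ht), wTy_length]
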